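/- Let Θ₀ be an N×T matrix of rank at most R, let M_{Λ₀}, M_{Γ₀} be the orthogonal projections annihilating its column and row spaces, and let Δ be any N×T matrix. Then ‖Θ₀ + Δ‖_nuc ≥ ‖Θ₀‖_nuc + ‖M_{Λ₀} Δ M_{Γ₀}‖_nuc − ‖Δ − M_{Λ₀} Δ M_{Γ₀}‖_nuc. -/

import Mathlib

/-!
The nuclear norm is dual to the operator norm: `tr (Uᴴ A) ≤ ‖A‖_nuc` whenever `Uᴴ U ≤ 1`, with
equality for the partial isometry `U_A = A (AᴴA)^{-1/2}` of the polar decomposition; this gives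
the triangle inequality. If `Aᴴ B = 0` and `A Bᴴ = 0`, then `U_Aᴴ U_A` and `U_Bᴴ U_B` are the
projections onto the row spaces of `A` and `B`, which are orthogonal, so `U_A + U_B` is again a
contraction and certifies `‖A‖_nuc + ‖B‖_nuc ≤ ‖A + B‖_nuc`. With `A = Θ₀` and `B = M_Λ Δ M_Γ`
this is the decomposability of the nuclear norm, and the triangle inequality finishes the proof.
-/

open Matrix BigOperators MeasureTheory ProbabilityTheory

/-- The singular values of a real matrix `A`, defined as the square roots of the
eigenvalues of `Aᴴ * A` (not sorted). -/
noncomputable def singularValues {N T : ℕ} (A : Matrix (Fin N) (Fin T) ℝ) : Fin T → ℝ :=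
  fun j => Real.sqrt ((Matrix.isHermitian_conjTranspose_mul_self A).eigenvalues j)

/-- The nuclear norm of a real matrix: the sum of its singular values. -/
noncomputable def nuclearNorm {N T : ℕ} (A : Matrix (Fin N) (Fin T) ℝ) : ℝ :=
  ∑ j, singularValues A j

/-- The Frobenius norm of a real matrix. -/
noncomputable def frobNorm {N T : ℕ} (A : Matrix (Fin N) (Fin T) ℝ) : ℝ :=
  Real.sqrt (∑ i, ∑ j, (A i j)^2)

/-- The operator (spectral) norm of a real matrix: its largest singular value. -/
noncomputable def opNorm {N T : ℕ} (A : Matrix (Fin N) (Fin T) ℝ) : ℝ :=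
  ⨆ j, singularValues A j

open scoped MatrixOrder

namespace Matrix.IsHermitian

variable {𝕜 n : Type*} [RCLike 𝕜] [Fintype n] [DecidableEq n] {A : Matrix n n 𝕜}
  (hA : A.IsHermitian)

lemma cfc_mul_cfc (f g : ℝ → ℝ) : hA.cfc f * hA.cfc g = hA.cfc (fun x => f x * g x) := by
  rw [IsHermitian.cfc, IsHermitian.cfc, ← map_mul, diagonal_mul_diagonal]
  simp [IsHermitian.cfc, Function.comp_def]

lemma cfc_conjTranspose (f : ℝ → ℝ) : (hA.cfc f)ᴴ = hA.cfc f := by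
  rw [← star_eq_conjTranspose, IsHermitian.cfc, ← map_star, star_eq_conjTranspose,
    diagonal_conjTranspose]
  simp [Function.comp_def, Pi.star_def]

lemma trace_cfc (f : ℝ → ℝ) : (hA.cfc f).trace = ∑ i, (f (hA.eigenvalues i) : 𝕜) := by
  rw [IsHermitian.cfc, Unitary.conjStarAlgAut_apply, trace_mul_cycle, Unitary.coe_star_mul_self,
    one_mul, trace_diagonal]
  rfl

lemma cfc_id : hA.cfc id = A := hA.spectral_theorem.symm

lemma cfc_mul_self (f : ℝ → ℝ) : hA.cfc f * A = hA.cfc (fun x => f x * x) :=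
  calc hA.cfc f * A = hA.cfc f * hA.cfc id := by rw [hA.cfc_id]
    _ = _ := hA.cfc_mul_cfc f id

lemma self_mul_cfc (f : ℝ → ℝ) : A * hA.cfc f = hA.cfc (fun x => x * f x) :=
  calc A * hA.cfc f = hA.cfc id * hA.cfc f := by rw [hA.cfc_id]
    _ = _ := hA.cfc_mul_cfc id f

lemma cfc_congr {f g : ℝ → ℝ} (h : ∀ i, f (hA.eigenvalues i) = g (hA.eigenvalues i)) :
    hA.cfc f = hA.cfc g := by
  simp only [IsHermitian.cfc, Function.comp_def, h]

end Matrix.IsHermitian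

namespace Matrix

variable {m n : Type*} [Fintype m]

lemma conjTranspose_mul_apply_self_le_sqrt_mul_sqrt (X Y : Matrix m n ℝ) (j : n) :
    (Xᴴ * Y) j j ≤ √((Xᴴ * X) j j) * √((Yᴴ * Y) j j) := by
  simpa [mul_apply, sq] using Real.sum_mul_le_sqrt_mul_sqrt Finset.univ (X · j) (Y · j)

variable [Fintype n] [DecidableEq n]

lemma conjTranspose_mul_self_mul_unitary_apply_le_one {U : Matrix m n ℝ} (hU : Uᴴ * U ≤ 1)
    {V : Matrix n n ℝ} (hV : Vᴴ * V = 1) (j : n) :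
    ((U * V)ᴴ * (U * V)) j j ≤ 1 := by
  have h : (U * V)ᴴ * (U * V) ≤ 1 :=
    calc (U * V)ᴴ * (U * V) = star V * (Uᴴ * U) * V := by
          rw [star_eq_conjTranspose, conjTranspose_mul, Matrix.mul_assoc, Matrix.mul_assoc,
            Matrix.mul_assoc]
      _ ≤ star V * 1 * V := star_left_conjugate_le_conjugate hU V
      _ = 1 := by rw [Matrix.mul_one, star_eq_conjTranspose, hV]
  simpa using (le_iff.mp h).diag_nonneg (i := j)

lemma trace_conjTranspose_mul_le_sum_sqrt_eigenvalues {U : Matrix m n ℝ} (hU : Uᴴ * U ≤ 1)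
    (A : Matrix m n ℝ) :
    (Uᴴ * A).trace ≤ ∑ j, √((isHermitian_conjTranspose_mul_self A).eigenvalues j) := by
  set V : Matrix n n ℝ := ↑(isHermitian_conjTranspose_mul_self A).eigenvectorUnitary
  have hV : Vᴴ * V = 1 := by rw [← star_eq_conjTranspose]; exact Unitary.coe_star_mul_self _
  have hV' : V * Vᴴ = 1 := by rw [← star_eq_conjTranspose]; exact Unitary.coe_mul_star_self _
  have hAV : (A * V)ᴴ * (A * V) = diagonal (isHermitian_conjTranspose_mul_self A).eigenvalues := by
    simpa [V, Unitary.conjStarAlgAut_star_apply, star_eq_conjTranspose, conjTranspose_mul,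
      Matrix.mul_assoc, Function.comp_def] using
      (isHermitian_conjTranspose_mul_self A).conjStarAlgAut_star_eigenvectorUnitary
  have htr : (Uᴴ * A).trace = ((U * V)ᴴ * (A * V)).trace :=
    calc (Uᴴ * A).trace = (Uᴴ * A * (V * Vᴴ)).trace := by rw [hV', Matrix.mul_one]
      _ = (Vᴴ * (Uᴴ * A) * V).trace := by rw [← Matrix.mul_assoc, trace_mul_cycle]
      _ = ((U * V)ᴴ * (A * V)).trace := by simp only [conjTranspose_mul, Matrix.mul_assoc]
  -- Cauchy–Schwarz on the `j`-th columns: `‖U v_j‖ ≤ 1` and `‖A v_j‖² = λ_j`.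
  rw [htr, trace]
  refine Finset.sum_le_sum fun j _ =>
    (conjTranspose_mul_apply_self_le_sqrt_mul_sqrt _ _ j).trans ?_
  rw [hAV, diagonal_apply_eq]
  exact mul_le_of_le_one_left (Real.sqrt_nonneg _)
    (Real.sqrt_le_one.mpr (conjTranspose_mul_self_mul_unitary_apply_le_one hU hV j))

/-- `A (AᴴA)^{-1/2}`, the partial isometry of the polar decomposition: since `(√0)⁻¹ = 0`, the
inverse square root vanishes on the kernel of `A`. -/
noncomputable def polarIsometry (A : Matrix m n ℝ) : Matrix m n ℝ :=
  A * (isHermitian_conjTranspose_mul_self A).cfc (fun x => (√x)⁻¹)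

noncomputable def rowSpaceProj (A : Matrix m n ℝ) : Matrix n n ℝ :=
  (isHermitian_conjTranspose_mul_self A).cfc (fun x => x⁻¹ * x)

lemma rowSpaceProj_eq_cfc_inv_mul (A : Matrix m n ℝ) :
    rowSpaceProj A = (isHermitian_conjTranspose_mul_self A).cfc (·⁻¹) * (Aᴴ * A) :=
  (IsHermitian.cfc_mul_self _ _).symm

lemma rowSpaceProj_eq_mul_cfc_inv (A : Matrix m n ℝ) :
    rowSpaceProj A = (Aᴴ * A) * (isHermitian_conjTranspose_mul_self A).cfc (·⁻¹) := by
  simp only [rowSpaceProj, IsHermitian.self_mul_cfc, mul_comm]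

lemma isStarProjection_rowSpaceProj (A : Matrix m n ℝ) : IsStarProjection (rowSpaceProj A) where
  isIdempotentElem := by
    rw [IsIdempotentElem, rowSpaceProj, IsHermitian.cfc_mul_cfc]
    congr 1; ext x
    rcases eq_or_ne x 0 with rfl | hx <;> simp [*]
  isSelfAdjoint := IsHermitian.cfc_conjTranspose _ _

lemma rowSpaceProj_mul_rowSpaceProj_eq_zero {A B : Matrix m n ℝ} (h : A * Bᴴ = 0) :
    rowSpaceProj A * rowSpaceProj B = 0 := by
  rw [rowSpaceProj_eq_cfc_inv_mul, rowSpaceProj_eq_mul_cfc_inv]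
  simp only [Matrix.mul_assoc]
  rw [← Matrix.mul_assoc A, h, Matrix.zero_mul, Matrix.mul_zero, Matrix.mul_zero]

lemma conjTranspose_polarIsometry_mul (A B : Matrix m n ℝ) :
    (polarIsometry A)ᴴ * B =
      (isHermitian_conjTranspose_mul_self A).cfc (fun x => (√x)⁻¹) * (Aᴴ * B) := by
  rw [polarIsometry, conjTranspose_mul, IsHermitian.cfc_conjTranspose, Matrix.mul_assoc]

lemma conjTranspose_polarIsometry_mul_eq_zero {A B : Matrix m n ℝ} (h : Aᴴ * B = 0) :
    (polarIsometry A)ᴴ * B = 0 := by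
  rw [conjTranspose_polarIsometry_mul, h, Matrix.mul_zero]

lemma trace_conjTranspose_polarIsometry_mul_self (A : Matrix m n ℝ) :
    ((polarIsometry A)ᴴ * A).trace =
      ∑ j, √((isHermitian_conjTranspose_mul_self A).eigenvalues j) := by
  rw [conjTranspose_polarIsometry_mul, IsHermitian.cfc_mul_self, IsHermitian.trace_cfc]
  simp [← div_eq_inv_mul, Real.div_sqrt]

lemma conjTranspose_polarIsometry_mul_polarIsometry (A : Matrix m n ℝ) :
    (polarIsometry A)ᴴ * polarIsometry A = rowSpaceProj A := by
  have hA := isHermitian_conjTranspose_mul_self A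
  rw [conjTranspose_polarIsometry_mul, polarIsometry, ← Matrix.mul_assoc Aᴴ, ← Matrix.mul_assoc,
    hA.cfc_mul_self, hA.cfc_mul_cfc, rowSpaceProj]
  refine hA.cfc_congr fun j => ?_
  obtain ⟨s, hs, hev⟩ : ∃ s, 0 ≤ s ∧ hA.eigenvalues j = s ^ 2 :=
    ⟨_, Real.sqrt_nonneg _, (Real.sq_sqrt (eigenvalues_conjTranspose_mul_self_nonneg A j)).symm⟩
  rw [hev, Real.sqrt_sq hs]
  rcases eq_or_ne s 0 with rfl | hs0
  · simp
  · field_simp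

lemma conjTranspose_polarIsometry_mul_polarIsometry_le_one (A : Matrix m n ℝ) :
    (polarIsometry A)ᴴ * polarIsometry A ≤ 1 := by
  rw [conjTranspose_polarIsometry_mul_polarIsometry]
  exact (isStarProjection_rowSpaceProj A).le_one

lemma add_conjTranspose_polarIsometry_mul_polarIsometry_le_one {A B : Matrix m n ℝ}
    (h₁ : Aᴴ * B = 0) (h₂ : A * Bᴴ = 0) :
    (polarIsometry A + polarIsometry B)ᴴ * (polarIsometry A + polarIsometry B) ≤ 1 := by
  have h₁' : Bᴴ * A = 0 := by simpa using congrArg conjTranspose h₁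
  have cross {X Y : Matrix m n ℝ} (h : Xᴴ * Y = 0) : (polarIsometry X)ᴴ * polarIsometry Y = 0 := by
    rw [conjTranspose_polarIsometry_mul, polarIsometry, ← Matrix.mul_assoc Xᴴ, h,
      Matrix.zero_mul, Matrix.mul_zero]
  rw [conjTranspose_add, Matrix.add_mul, Matrix.mul_add, Matrix.mul_add, cross h₁, cross h₁',
    add_zero, zero_add, conjTranspose_polarIsometry_mul_polarIsometry,
    conjTranspose_polarIsometry_mul_polarIsometry]
  exact ((isStarProjection_rowSpaceProj A).add (isStarProjection_rowSpaceProj B)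
    (rowSpaceProj_mul_rowSpaceProj_eq_zero h₂)).le_one

end Matrix

section NuclearNorm

variable {N T : ℕ}

lemma nuclearNorm_eq_trace_polarIsometry (A : Matrix (Fin N) (Fin T) ℝ) :
    nuclearNorm A = ((polarIsometry A)ᴴ * A).trace :=
  (trace_conjTranspose_polarIsometry_mul_self A).symm

lemma trace_conjTranspose_mul_le_nuclearNorm {U : Matrix (Fin N) (Fin T) ℝ} (hU : Uᴴ * U ≤ 1)
    (A : Matrix (Fin N) (Fin T) ℝ) : (Uᴴ * A).trace ≤ nuclearNorm A :=
  trace_conjTranspose_mul_le_sum_sqrt_eigenvalues hU A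

lemma nuclearNorm_add_le (A B : Matrix (Fin N) (Fin T) ℝ) :
    nuclearNorm (A + B) ≤ nuclearNorm A + nuclearNorm B := by
  have hU := conjTranspose_polarIsometry_mul_polarIsometry_le_one (A + B)
  rw [nuclearNorm_eq_trace_polarIsometry (A + B), Matrix.mul_add, trace_add]
  exact add_le_add (trace_conjTranspose_mul_le_nuclearNorm hU A)
    (trace_conjTranspose_mul_le_nuclearNorm hU B)

lemma nuclearNorm_neg (A : Matrix (Fin N) (Fin T) ℝ) : nuclearNorm (-A) = nuclearNorm A := by
  have h : (-A)ᴴ * -A = Aᴴ * A := by simp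
  unfold nuclearNorm singularValues
  congr! 4

lemma nuclearNorm_add_of_orthogonal {A B : Matrix (Fin N) (Fin T) ℝ} (h₁ : Aᴴ * B = 0)
    (h₂ : A * Bᴴ = 0) : nuclearNorm (A + B) = nuclearNorm A + nuclearNorm B := by
  refine (nuclearNorm_add_le A B).antisymm ?_
  have hU := add_conjTranspose_polarIsometry_mul_polarIsometry_le_one h₁ h₂
  have h₁' : Bᴴ * A = 0 := by simpa using congrArg conjTranspose h₁
  calc nuclearNorm A + nuclearNorm B
      = ((polarIsometry A + polarIsometry B)ᴴ * (A + B)).trace := by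
        rw [conjTranspose_add, Matrix.add_mul, Matrix.mul_add, Matrix.mul_add,
          conjTranspose_polarIsometry_mul_eq_zero h₁, conjTranspose_polarIsometry_mul_eq_zero h₁',
          add_zero, zero_add, trace_add, nuclearNorm_eq_trace_polarIsometry,
          nuclearNorm_eq_trace_polarIsometry]
    _ ≤ nuclearNorm (A + B) := trace_conjTranspose_mul_le_nuclearNorm hU _

end NuclearNorm

theorem nuclearNorm_add_ge_decomposability_general {N T : ℕ}
    (Θ₀ Δ : Matrix (Fin N) (Fin T) ℝ)
    (MΛ : Matrix (Fin N) (Fin N) ℝ) (MΓ : Matrix (Fin T) (Fin T) ℝ)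
    (hΛs : MΛᵀ = MΛ) (hΓs : MΓᵀ = MΓ)
    (hann1 : MΛ * Θ₀ = 0) (hann2 : Θ₀ * MΓ = 0) :
    nuclearNorm Θ₀ + nuclearNorm (MΛ * Δ * MΓ) - nuclearNorm (Δ - MΛ * Δ * MΓ)
      ≤ nuclearNorm (Θ₀ + Δ) := by
  set B := MΛ * Δ * MΓ
  have h₁ : Θ₀ᴴ * B = 0 := by
    rw [conjTranspose_eq_transpose_of_trivial, ← Matrix.mul_assoc, ← Matrix.mul_assoc, ← hΛs,
      ← transpose_mul, hann1, transpose_zero, Matrix.zero_mul, Matrix.zero_mul]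
  have h₂ : Θ₀ * Bᴴ = 0 := by
    rw [conjTranspose_eq_transpose_of_trivial, transpose_mul, hΓs, ← Matrix.mul_assoc, hann2,
      Matrix.zero_mul]
  have hsplit : nuclearNorm (Θ₀ + B) ≤ nuclearNorm (Θ₀ + Δ) + nuclearNorm (Δ - B) :=
    calc nuclearNorm (Θ₀ + B) = nuclearNorm ((Θ₀ + Δ) + -(Δ - B)) := by congr 1; abel
      _ ≤ nuclearNorm (Θ₀ + Δ) + nuclearNorm (Δ - B) := by
        simpa only [nuclearNorm_neg] using nuclearNorm_add_le (Θ₀ + Δ) (-(Δ - B))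
  linarith [nuclearNorm_add_of_orthogonal h₁ h₂]

/-- Nuclear-norm decomposability bound: if `rank Θ₀ ≤ R` and the
orthogonal projections `M_Λ`, `M_Γ` annihilate the column and row spaces of `Θ₀`,
then `‖Θ₀ + Δ‖_nuc ≥ ‖Θ₀‖_nuc + ‖M_Λ Δ M_Γ‖_nuc − ‖Δ − M_Λ Δ M_Γ‖_nuc`. -/
theorem nuclearNorm_add_ge_decomposability {N T R : ℕ}
    (Θ₀ Δ : Matrix (Fin N) (Fin T) ℝ) (hrank : Θ₀.rank ≤ R)
    (MΛ : Matrix (Fin N) (Fin N) ℝ) (MΓ : Matrix (Fin T) (Fin T) ℝ)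
    (hΛs : MΛᵀ = MΛ) (hΛi : MΛ * MΛ = MΛ) (hΓs : MΓᵀ = MΓ) (hΓi : MΓ * MΓ = MΓ)
    (hann1 : MΛ * Θ₀ = 0) (hann2 : Θ₀ * MΓ = 0) :
    nuclearNorm Θ₀ + nuclearNorm (MΛ * Δ * MΓ) - nuclearNorm (Δ - MΛ * Δ * MΓ)
      ≤ nuclearNorm (Θ₀ + Δ) :=
  nuclearNorm_add_ge_decomposability_general Θ₀ Δ MΛ MΓ hΛs hΓs hann1 hann2
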